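/- arXiv:1303.0697 — 3 statements merged into one kernel-verified Lean document; each statement's English description precedes it below -/
import Mathlib

section
/- Let F be a field, α₀ : F → F a field automorphism with α₀ ∘ α₀ = id, V a finite-dimensional F-vector space, and W := End_F(V). Then: (1) for every nondegenerate α₀-sesquilinear form b : V × V → F there is a unique anti-automorphism α of W such that b(w x, y) = b(x, α(w) y) for all x, y ∈ V and w ∈ W, and this α satisfies α(c·id_V) = α₀(c)·id_V for all c ∈ F; (2) conversely, every anti-automorphism α of W with α(c·id_V) = α₀(c)·id_V for all c ∈ F arises in this way from some nondegenerate α₀-sesquilinear form; (3) two nondegenerate α₀-sesquilinear forms b, b' determine the same anti-automorphism of W if and only if b' = b·c for some c ∈ F \ {0}; (4) the anti-automorphism α corresponding to b is an involution if and only if there exists λ ∈ F with λ·α₀(λ) = 1 and b(x, y) = λ·α₀(b(y, x)) for all x, y ∈ V (i.e., b is λ-hermitian). -/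
universe u v

/-- An anti-endomorphism of a ring: additive, unital, reverses multiplication. -/
def IsAntiEndo {W : Type*} [Ring W] (α : W → W) : Prop :=
  (∀ u v : W, α (u + v) = α u + α v) ∧ α 1 = 1 ∧ ∀ u v : W, α (u * v) = α v * α u

/-- An anti-automorphism of a ring: a bijective anti-endomorphism. -/
def IsAntiAuto {W : Type*} [Ring W] (α : W → W) : Prop :=
  IsAntiEndo α ∧ Function.Bijective α

/-- An `α₀`-sesquilinear form on `V`: biadditive, `α₀`-semilinear in the first variable
and linear in the second. -/
def IsSesq {F : Type u} [Field F] {V : Type v} [AddCommGroup V] [Module F V]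
    (α₀ : F → F) (b : V → V → F) : Prop :=
  (∀ x x' y : V, b (x + x') y = b x y + b x' y) ∧
  (∀ x y y' : V, b x (y + y') = b x y + b x y') ∧
  (∀ (a : F) (x y : V), b (a • x) y = α₀ a * b x y) ∧
  (∀ (a : F) (x y : V), b x (a • y) = b x y * a)

/-- Nondegeneracy of a form `b : V × V → F`. -/
def Nondeg {F : Type u} [Field F] {V : Type v} [AddCommGroup V] [Module F V]
    (b : V → V → F) : Prop :=
  (∀ x : V, (∀ y : V, b x y = 0) → x = 0) ∧ (∀ y : V, (∀ x : V, b x y = 0) → y = 0)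

/-- `α` is adjoint to the form `b`: `b(w x, y) = b(x, α(w) y)`. -/
def AdjRel {F : Type u} [Field F] {V : Type v} [AddCommGroup V] [Module F V]
    (b : V → V → F) (α : Module.End F V → Module.End F V) : Prop :=
  ∀ (w : Module.End F V) (x y : V), b (w x) y = b x (α w y)

/-! Nondegeneracy makes `x ↦ b x ·` an injective `α₀`-semilinear map `V → Dual F V`, hence a
bijection by counting dimensions; so every `α₀`-sesquilinear form is `b (U ·) ·` for an
endomorphism `U`, which yields the adjoint anti-automorphism. If `b` and `b'` have the same
adjoint, the `U` with `b' = b (U ·) ·` commutes with all of `End V` and is therefore a scalar;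
for an involution this applies to `b' x y = α₀ (b y x)` and gives hermitianity. Conversely, if `β`
is the adjoint of some fixed nondegenerate form `b₀`, then `β⁻¹ ∘ α` is an `F`-algebra
automorphism of `End V`, inner by Skolem–Noether: `α w = β (T w T⁻¹)`, and `b₀ (T ·) ·` is a
form with adjoint `α`. -/

open Module

theorem Function.Injective.surjective_of_map_smul {K M N : Type*} [Field K] [AddCommGroup M]
    [Module K M] [AddCommGroup N] [Module K N] [FiniteDimensional K N] {σ : K → K}
    (hσ : Function.Surjective σ) (f : M →+ N) (hf : Function.Injective f)
    (hsmul : ∀ (a : K) (m : M), f (a • m) = σ a • f m) (hdim : finrank K N ≤ finrank K M) :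
    Function.Surjective f := by
  let S : Submodule K N :=
    { carrier := Set.range f
      add_mem' := by
        rintro _ _ ⟨m, rfl⟩ ⟨m', rfl⟩
        exact ⟨m + m', map_add f m m'⟩
      zero_mem' := ⟨0, map_zero f⟩
      smul_mem' := by
        rintro a _ ⟨m, rfl⟩
        obtain ⟨a, rfl⟩ := hσ a
        exact ⟨a • m, hsmul a m⟩ }
  let j : M →+ S :=
    { toFun := fun m => ⟨f m, m, rfl⟩
      map_zero' := Subtype.ext (map_zero f)
      map_add' := fun m m' => Subtype.ext (map_add f m m') }
  have hrank : finrank K M ≤ finrank K S :=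
    finrank_le_finrank_of_rank_le_rank
      (lift_rank_le_of_surjective_injective σ j hσ (fun m m' h => hf (congrArg Subtype.val h))
        fun a m => Subtype.ext (hsmul a m))
      (Module.rank_lt_aleph0 K S)
  have hS : S = ⊤ := Submodule.eq_top_of_finrank_eq ((Submodule.finrank_le S).antisymm
    (hdim.trans hrank))
  intro n
  exact (hS ▸ Submodule.mem_top : n ∈ S)

noncomputable def IsAntiAuto.toRingEquiv {W : Type*} [Ring W] {α : W → W} (h : IsAntiAuto α) :
    W ≃+* Wᵐᵒᵖ :=
  { (Equiv.ofBijective α h.2).trans MulOpposite.opEquiv with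
    map_mul' := fun u v => by simp [h.1.2.2]
    map_add' := fun u v => by simp [h.1.1] }

def flipConj {F : Type u} {V : Type v} (α₀ : F → F) (b : V → V → F) : V → V → F :=
  fun x y => α₀ (b y x)

theorem exists_hermitian_of_flipConj_eq_mul {F : Type u} [Field F] {V : Type v}
    {α₀ : F →+* F} (hα₀ : ∀ a, α₀ (α₀ a) = a) {b : V → V → F} {c : F}
    (h : ∀ x y, flipConj α₀ b x y = b x y * c) :
    ∃ lam : F, lam * α₀ lam = 1 ∧ ∀ x y, b x y = lam * α₀ (b y x) := by
  have hflip : ∀ x y, α₀ (b y x) = b x y * c := h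
  have hherm : ∀ x y, b x y = α₀ c * α₀ (b y x) := fun x y => by
    rw [mul_comm, ← map_mul, ← hflip y x, hα₀]
  by_cases h0 : ∀ x y, b x y = 0
  · exact ⟨1, by simp, fun x y => by simp [h0]⟩
  obtain ⟨x, y, hxy⟩ : ∃ x y, b x y ≠ 0 := by simpa only [not_forall] using h0
  refine ⟨α₀ c, mul_right_cancel₀ hxy ?_, hherm⟩
  calc α₀ c * α₀ (α₀ c) * b x y = α₀ c * c * b x y := by rw [hα₀]
    _ = α₀ c * α₀ (b y x) := by rw [hflip]; ring
    _ = 1 * b x y := by rw [one_mul, ← hherm]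

section Sesquilinear

variable {F : Type u} [Field F] {V : Type v} [AddCommGroup V] [Module F V]
  {α₀ : F → F} {b b' : V → V → F}

namespace IsSesq

theorem map_sub_left (hb : IsSesq α₀ b) (x x' y : V) : b (x - x') y = b x y - b x' y := by
  rw [eq_sub_iff_add_eq, ← hb.1, sub_add_cancel]

theorem map_sub_right (hb : IsSesq α₀ b) (x y y' : V) : b x (y - y') = b x y - b x y' := by
  rw [eq_sub_iff_add_eq, ← hb.2.1, sub_add_cancel]

theorem map_zero_left (hb : IsSesq α₀ b) (y : V) : b 0 y = 0 := by
  simpa using hb.map_sub_left 0 0 y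

theorem map_zero_right (hb : IsSesq α₀ b) (x : V) : b x 0 = 0 := by
  simpa using hb.map_sub_right x 0 0

theorem comp_left (hb : IsSesq α₀ b) (w : Module.End F V) : IsSesq α₀ fun x y => b (w x) y :=
  ⟨fun x x' y => by dsimp only; rw [map_add, hb.1], fun x => hb.2.1 (w x),
    fun a x y => by dsimp only; rw [map_smul, hb.2.2.1], fun a x => hb.2.2.2 a (w x)⟩

theorem comp_right (hb : IsSesq α₀ b) (w : Module.End F V) : IsSesq α₀ fun x y => b x (w y) :=
  ⟨fun x x' y => hb.1 x x' (w y), fun x y y' => by dsimp only; rw [map_add, hb.2.1],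
    fun a x y => hb.2.2.1 a x (w y), fun a x y => by dsimp only; rw [map_smul, hb.2.2.2]⟩

def toDual (hb : IsSesq α₀ b) (x : V) : Module.Dual F V where
  toFun := b x
  map_add' := hb.2.1 x
  map_smul' a y := by rw [hb.2.2.2, smul_eq_mul, mul_comm]; rfl

end IsSesq

namespace Nondeg

theorem ext_left (hnd : Nondeg b) (hb : IsSesq α₀ b) {x x' : V} (h : ∀ y, b x y = b x' y) :
    x = x' :=
  sub_eq_zero.mp (hnd.1 _ fun y => by rw [hb.map_sub_left, h, sub_self])

theorem ext_right (hnd : Nondeg b) (hb : IsSesq α₀ b) {y y' : V} (h : ∀ x, b x y = b x y') :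
    y = y' :=
  sub_eq_zero.mp (hnd.2 _ fun x => by rw [hb.map_sub_right, h, sub_self])

theorem comp_left (hnd : Nondeg b) (T : V ≃ₗ[F] V) : Nondeg fun x y => b (T x) y :=
  ⟨fun x hx => T.map_eq_zero_iff.mp (hnd.1 _ hx),
    fun y hy => hnd.2 y fun x => by simpa using hy (T.symm x)⟩

end Nondeg

namespace AdjRel

variable {α α' : Module.End F V → Module.End F V}

theorem unique (hb : IsSesq α₀ b) (hnd : Nondeg b) (h : AdjRel b α) (h' : AdjRel b α') : α = α' :=
  funext fun w => LinearMap.ext fun y => hnd.ext_right hb fun x => by rw [← h, h']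

theorem isAntiEndo (hb : IsSesq α₀ b) (hnd : Nondeg b) (h : AdjRel b α) : IsAntiEndo α := by
  refine ⟨fun u v => ?_, ?_, fun u v => ?_⟩ <;> ext y <;> refine hnd.ext_right hb fun x => ?_
  · rw [LinearMap.add_apply, hb.2.1, ← h, ← h, ← h, LinearMap.add_apply, hb.1]
  · rw [← h]; rfl
  · rw [Module.End.mul_apply, ← h, ← h, ← h]; rfl

theorem injective (hb : IsSesq α₀ b) (hnd : Nondeg b) (h : AdjRel b α) :
    Function.Injective α :=
  fun u v huv => LinearMap.ext fun x => hnd.ext_left hb fun y => by rw [h, h, huv]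

theorem map_smul_one (hb : IsSesq α₀ b) (hnd : Nondeg b) (h : AdjRel b α) (c : F) :
    α (c • 1) = α₀ c • 1 := by
  ext y
  refine hnd.ext_right hb fun x => ?_
  rw [← h]
  simp only [LinearMap.smul_apply, Module.End.one_apply, hb.2.2.1, hb.2.2.2, mul_comm]

theorem flipConj (h : AdjRel b α) (hinv : ∀ w, α (α w) = w) : AdjRel (flipConj α₀ b) α :=
  fun w x y => by simp only [_root_.flipConj]; rw [h (α w) y x, hinv]

end AdjRel

end Sesquilinear

section Involution

variable {F : Type u} [Field F] {V : Type v} [AddCommGroup V] [Module F V]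
  {α₀ : F →+* F} {b b' : V → V → F}

theorem IsSesq.flipConj (hα₀ : ∀ a, α₀ (α₀ a) = a) (hb : IsSesq α₀ b) :
    IsSesq α₀ (flipConj α₀ b) :=
  ⟨fun x x' y => by simp only [_root_.flipConj, hb.2.1, map_add],
    fun x y y' => by simp only [_root_.flipConj, hb.1, map_add],
    fun a x y => by simp only [_root_.flipConj, hb.2.2.2, map_mul, mul_comm],
    fun a x y => by simp only [_root_.flipConj, hb.2.2.1, map_mul, hα₀, mul_comm]⟩

theorem Nondeg.flipConj (hnd : Nondeg b) : Nondeg (flipConj α₀ b) :=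
  ⟨fun x hx => hnd.2 x fun y => (map_eq_zero α₀).mp (hx y),
    fun y hy => hnd.1 y fun x => (map_eq_zero α₀).mp (hy x)⟩

theorem AdjRel.apply_apply_of_hermitian (hα₀ : ∀ a, α₀ (α₀ a) = a) (hb : IsSesq α₀ b)
    (hnd : Nondeg b) {α : Module.End F V → Module.End F V} (h : AdjRel b α) {lam : F}
    (hlam : lam * α₀ lam = 1) (hherm : ∀ x y, b x y = lam * α₀ (b y x)) (w : Module.End F V) :
    α (α w) = w := by
  ext y
  refine hnd.ext_right hb fun x => ?_
  calc b x (α (α w) y) = b (α w x) y := (h (α w) x y).symm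
    _ = lam * α₀ (b y (α w x)) := hherm _ _
    _ = lam * α₀ (b (w y) x) := by rw [← h w y x]
    _ = lam * α₀ (lam * α₀ (b x (w y))) := by rw [hherm (w y) x]
    _ = lam * α₀ lam * b x (w y) := by rw [map_mul, hα₀, mul_assoc]
    _ = b x (w y) := by rw [hlam, one_mul]

variable [FiniteDimensional F V]

theorem IsSesq.surjective_toDual (hα₀ : ∀ a, α₀ (α₀ a) = a) (hb : IsSesq α₀ b)
    (hnd : Nondeg b) : Function.Surjective hb.toDual :=
  Function.Injective.surjective_of_map_smul (σ := α₀) (fun a => ⟨α₀ a, hα₀ a⟩)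
    { toFun := hb.toDual
      map_zero' := LinearMap.ext hb.map_zero_left
      map_add' := fun x x' => LinearMap.ext (hb.1 x x') }
    (fun _ _ h => hnd.ext_left hb (LinearMap.congr_fun h))
    (fun a x => LinearMap.ext (hb.2.2.1 a x)) Subspace.dual_finrank_eq.le

theorem IsSesq.exists_end_eq (hα₀ : ∀ a, α₀ (α₀ a) = a) (hb : IsSesq α₀ b) (hnd : Nondeg b)
    (hb' : IsSesq α₀ b') : ∃ U : Module.End F V, ∀ x y, b (U x) y = b' x y := by
  choose U hU using fun x => hb.surjective_toDual hα₀ hnd (hb'.toDual x)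
  have hUb : ∀ x y, b (U x) y = b' x y := fun x => LinearMap.congr_fun (hU x)
  refine ⟨{ toFun := U
            map_add' := fun x x' => hnd.ext_left hb fun y => ?_
            map_smul' := fun a x => hnd.ext_left hb fun y => ?_ }, hUb⟩
  · rw [hb.1, hUb, hUb, hUb, hb'.1]
  · rw [RingHom.id_apply, hb.2.2.1, hUb, hUb, hb'.2.2.1]

theorem IsSesq.exists_leftAdjoint (hα₀ : ∀ a, α₀ (α₀ a) = a) (hb : IsSesq α₀ b)
    (hnd : Nondeg b) (u : Module.End F V) :
    ∃ w : Module.End F V, ∀ x y, b (w x) y = b x (u y) :=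
  hb.exists_end_eq hα₀ hnd (hb.comp_right u)

theorem IsSesq.exists_adjRel (hα₀ : ∀ a, α₀ (α₀ a) = a) (hb : IsSesq α₀ b) (hnd : Nondeg b) :
    ∃ α, AdjRel b α := by
  -- a right adjoint for `b` is a left adjoint for `flipConj α₀ b`
  have : ∀ w : Module.End F V, ∃ u : Module.End F V, ∀ x y, b (w x) y = b x (u y) := by
    intro w
    obtain ⟨u, hu⟩ := (hb.flipConj hα₀).exists_end_eq hα₀ hnd.flipConj
      ((hb.comp_left w).flipConj hα₀)
    exact ⟨u, fun x y => α₀.injective (hu y x).symm⟩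
  choose α hα using this
  exact ⟨α, hα⟩

theorem AdjRel.isAntiAuto (hα₀ : ∀ a, α₀ (α₀ a) = a) (hb : IsSesq α₀ b) (hnd : Nondeg b)
    {α : Module.End F V → Module.End F V} (h : AdjRel b α) : IsAntiAuto α := by
  refine ⟨h.isAntiEndo hb hnd, h.injective hb hnd, fun u => ?_⟩
  obtain ⟨w, hw⟩ := hb.exists_leftAdjoint hα₀ hnd u
  exact ⟨w, LinearMap.ext fun y => hnd.ext_right hb fun x => by rw [← h, hw]⟩

theorem AdjRel.exists_ne_zero_eq_mul (hα₀ : ∀ a, α₀ (α₀ a) = a) (hb : IsSesq α₀ b)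
    (hnd : Nondeg b) (hb' : IsSesq α₀ b') (hnd' : Nondeg b')
    {α : Module.End F V → Module.End F V} (h : AdjRel b α) (h' : AdjRel b' α) :
    ∃ c : F, c ≠ 0 ∧ ∀ x y, b' x y = b x y * c := by
  obtain ⟨U, hU⟩ := hb.exists_end_eq hα₀ hnd hb'
  have hcentral : U ∈ Subalgebra.center F (Module.End F V) :=
    Subalgebra.mem_center_iff.mpr fun w => LinearMap.ext fun x => hnd.ext_left hb fun y => by
      rw [Module.End.mul_apply, Module.End.mul_apply, hU, h', ← hU, ← h]
  rw [Algebra.IsCentral.center_eq_bot, Algebra.mem_bot] at hcentral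
  obtain ⟨c, rfl⟩ := hcentral
  have hb'c : ∀ x y, b' x y = b x y * α₀ c := fun x y => by
    rw [← hU, Module.algebraMap_end_apply, hb.2.2.1, mul_comm]
  by_cases hc : α₀ c = 0
  · -- then `b' = 0`, so `V` is trivial
    refine ⟨1, one_ne_zero, fun x y => ?_⟩
    obtain rfl : y = 0 := hnd'.2 y fun x => by rw [hb'c, hc, mul_zero]
    rw [hb.map_zero_right, hb'.map_zero_right, zero_mul]
  · exact ⟨α₀ c, hc, hb'c⟩

theorem exists_isSesq_nondeg (α₀ : F →+* F) : ∃ b : V → V → F, IsSesq α₀ b ∧ Nondeg b := by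
  let B := Module.finBasis F V
  refine ⟨fun x y => ∑ i, α₀ (B.repr x i) * B.repr y i, ⟨?_, ?_, ?_, ?_⟩, ?_, ?_⟩
  · intro x x' y; simp [add_mul, Finset.sum_add_distrib]
  · intro x y y'; simp [mul_add, Finset.sum_add_distrib]
  · intro a x y; simp [Finset.mul_sum, mul_assoc]
  · intro a x y; simp [Finset.sum_mul, mul_assoc, mul_comm a]
  · intro x hx
    refine B.forall_coord_eq_zero_iff.mp fun i => (map_eq_zero α₀).mp ?_
    simpa [Finsupp.single_apply] using hx (B i)
  · intro y hy
    refine B.forall_coord_eq_zero_iff.mp fun i => ?_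
    simpa [Finsupp.single_apply] using hy (B i)

theorem IsAntiAuto.exists_adjRel (hα₀ : ∀ a, α₀ (α₀ a) = a)
    {α : Module.End F V → Module.End F V} (hα : IsAntiAuto α)
    (hres : ∀ c : F, α (c • 1) = α₀ c • 1) :
    ∃ b : V → V → F, IsSesq α₀ b ∧ Nondeg b ∧ AdjRel b α := by
  obtain ⟨b₀, hb₀, hnd₀⟩ := exists_isSesq_nondeg (V := V) α₀
  obtain ⟨β, hβ⟩ := hb₀.exists_adjRel hα₀ hnd₀
  have hβ' := hβ.isAntiAuto hα₀ hb₀ hnd₀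
  let φ : Module.End F V ≃ₐ[F] Module.End F V :=
    AlgEquiv.ofRingEquiv (f := hα.toRingEquiv.trans hβ'.toRingEquiv.symm) fun c => by
      rw [RingEquiv.trans_apply, RingEquiv.symm_apply_eq, Algebra.algebraMap_eq_smul_one]
      exact congrArg MulOpposite.op ((hres c).trans (hβ.map_smul_one hb₀ hnd₀ c).symm)
  obtain ⟨T, hT⟩ := φ.eq_linearEquivConjAlgEquiv
  have hαβ : ∀ w, α w = β (T.toLinearMap ∘ₗ w ∘ₗ T.symm.toLinearMap) := fun w =>
    MulOpposite.op_injective (hβ'.toRingEquiv.symm_apply_eq.mp (congrArg (· w) hT))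
  refine ⟨fun x y => b₀ (T x) y, hb₀.comp_left T, hnd₀.comp_left T, fun w x y => ?_⟩
  dsimp only
  rw [hαβ, ← hβ]
  simp

end Involution

/-- The classical correspondence between nondegenerate sesquilinear forms
over `(F, α₀)` up to scalars and anti-automorphisms of `End_F(V)` restricting to `α₀` on
`F`, with involutions corresponding to hermitian forms. -/
theorem stmt_0 {F : Type u} [Field F] (α₀ : F →+* F) (hα₀ : ∀ a : F, α₀ (α₀ a) = a)
    {V : Type v} [AddCommGroup V] [Module F V] [FiniteDimensional F V] :
    -- (1) existence and uniqueness of the adjoint anti-automorphism, which restricts to α₀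
    (∀ b : V → V → F, IsSesq (α₀ : F → F) b → Nondeg b →
      (∃! α : Module.End F V → Module.End F V, IsAntiAuto α ∧ AdjRel b α) ∧
      (∀ α : Module.End F V → Module.End F V, IsAntiAuto α → AdjRel b α →
        ∀ c : F, α (c • (1 : Module.End F V)) = α₀ c • (1 : Module.End F V))) ∧
    -- (2) every anti-automorphism restricting to α₀ comes from a nondegenerate form
    (∀ α : Module.End F V → Module.End F V, IsAntiAuto α →
      (∀ c : F, α (c • (1 : Module.End F V)) = α₀ c • (1 : Module.End F V)) →
      ∃ b : V → V → F, IsSesq (α₀ : F → F) b ∧ Nondeg b ∧ AdjRel b α) ∧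
    -- (3) two forms have the same anti-automorphism iff they agree up to a scalar
    (∀ b b' : V → V → F, IsSesq (α₀ : F → F) b → Nondeg b →
      IsSesq (α₀ : F → F) b' → Nondeg b' →
      ((∃ α : Module.End F V → Module.End F V, IsAntiAuto α ∧ AdjRel b α ∧ AdjRel b' α) ↔
        ∃ c : F, c ≠ 0 ∧ ∀ x y : V, b' x y = b x y * c)) ∧
    -- (4) involutions correspond to λ-hermitian forms
    (∀ (b : V → V → F) (α : Module.End F V → Module.End F V),
      IsSesq (α₀ : F → F) b → Nondeg b → IsAntiAuto α → AdjRel b α →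
      ((∀ w : Module.End F V, α (α w) = w) ↔
        ∃ lam : F, lam * α₀ lam = 1 ∧ ∀ x y : V, b x y = lam * α₀ (b y x))) := by
  refine ⟨fun b hb hnd => ?_, fun α hα hres => hα.exists_adjRel hα₀ hres,
    fun b b' hb hnd hb' hnd' => ⟨?_, ?_⟩, fun b α hb hnd _ h => ⟨fun hinv => ?_, ?_⟩⟩
  · obtain ⟨α, h⟩ := hb.exists_adjRel hα₀ hnd
    exact ⟨⟨α, ⟨h.isAntiAuto hα₀ hb hnd, h⟩, fun α' h' => h'.2.unique hb hnd h⟩,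
      fun α _ h => h.map_smul_one hb hnd⟩
  · rintro ⟨α, -, h, h'⟩
    exact h.exists_ne_zero_eq_mul hα₀ hb hnd hb' hnd' h'
  · rintro ⟨c, -, hc⟩
    obtain ⟨α, h⟩ := hb.exists_adjRel hα₀ hnd
    exact ⟨α, h.isAntiAuto hα₀ hb hnd, h, fun w x y => by rw [hc, hc, h]⟩
  · obtain ⟨c, -, hc⟩ := h.exists_ne_zero_eq_mul hα₀ hb hnd (hb.flipConj hα₀) hnd.flipConj
      (h.flipConj hinv)
    exact exists_hermitian_of_flipConj_eq_mul hα₀ hc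
  · rintro ⟨lam, hlam, hherm⟩
    exact h.apply_apply_of_hermitian hα₀ hb hnd hlam hherm
end

section
/- Let R be a ring, M a right R-module, K a double R-module, b : M × M → K a general bilinear form, and θ an anti-automorphism of K. Then: (1) if b is right regular, then b admits a right θ-asymmetry; (2) if b is right injective, then b admits at most one right θ-asymmetry; (3) if θ is an involution of K and b is θ-symmetric, then b is right regular if and only if it is left regular, and b is right injective if and only if it is left injective. -/
open MulOpposite TensorProduct Function

universe u v w v'

section Core

/-- An inner automorphism of a ring: conjugation by a unit. -/
def IsInnerAut {W : Type*} [Ring W] (φ : W → W) : Prop :=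
  ∃ u : Wˣ, ∀ w : W, φ w = ↑u * w * ↑u⁻¹

variable (R : Type u) [Ring R]

/-- A double `R`-module structure on the additive group `K`: two commuting
right `R`-module structures `m0` and `m1`. -/
structure DoubleModule (K : Type v) [AddCommGroup K] where
  m0 : K → R → K
  m1 : K → R → K
  m0_add_left : ∀ (k k' : K) (r : R), m0 (k + k') r = m0 k r + m0 k' r
  m0_add_right : ∀ (k : K) (r r' : R), m0 k (r + r') = m0 k r + m0 k r'
  m0_mul : ∀ (k : K) (r r' : R), m0 k (r * r') = m0 (m0 k r) r'
  m0_one : ∀ k : K, m0 k 1 = k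
  m1_add_left : ∀ (k k' : K) (r : R), m1 (k + k') r = m1 k r + m1 k' r
  m1_add_right : ∀ (k : K) (r r' : R), m1 k (r + r') = m1 k r + m1 k r'
  m1_mul : ∀ (k : K) (r r' : R), m1 k (r * r') = m1 (m1 k r) r'
  m1_one : ∀ k : K, m1 k 1 = k
  comm : ∀ (k : K) (a b : R), m1 (m0 k a) b = m0 (m1 k b) a

variable {R}

/-- A homomorphism of double `R`-modules. -/
def IsDoubleHom {K : Type v} {K' : Type w} [AddCommGroup K] [AddCommGroup K']
    (DK : DoubleModule R K) (DK' : DoubleModule R K') (f : K → K') : Prop :=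
  (∀ k k' : K, f (k + k') = f k + f k') ∧
  (∀ (k : K) (r : R), f (DK.m0 k r) = DK'.m0 (f k) r) ∧
  (∀ (k : K) (r : R), f (DK.m1 k r) = DK'.m1 (f k) r)

/-- An isomorphism of double `R`-modules. -/
def IsDoubleIso {K : Type v} {K' : Type w} [AddCommGroup K] [AddCommGroup K']
    (DK : DoubleModule R K) (DK' : DoubleModule R K') (f : K → K') : Prop :=
  IsDoubleHom DK DK' f ∧ Function.Bijective f

/-- An anti-automorphism of a double `R`-module: an additive bijection exchanging
the two module structures. -/
def IsDoubleAntiAuto {K : Type v} [AddCommGroup K] (DK : DoubleModule R K) (θ : K → K) : Prop :=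
  Function.Bijective θ ∧ (∀ k k' : K, θ (k + k') = θ k + θ k') ∧
  (∀ (k : K) (r : R), θ (DK.m0 k r) = DK.m1 (θ k) r) ∧
  (∀ (k : K) (r : R), θ (DK.m1 k r) = DK.m0 (θ k) r)

variable (R)

/-- A general bilinear form on a right `R`-module `M` (encoded as a module over `Rᵐᵒᵖ`)
with values in a double `R`-module `(K, DK)`. -/
structure GBF (M : Type v) [AddCommGroup M] [Module Rᵐᵒᵖ M]
    (K : Type w) [AddCommGroup K] (DK : DoubleModule R K) where
  b : M → M → K
  add_left : ∀ x x' y : M, b (x + x') y = b x y + b x' y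
  add_right : ∀ x y y' : M, b x (y + y') = b x y + b x y'
  smul_left : ∀ (x y : M) (r : R), b (op r • x) y = DK.m0 (b x y) r
  smul_right : ∀ (x y : M) (r : R), b x (op r • y) = DK.m1 (b x y) r

variable {R}

namespace GBF

variable {M : Type v} [AddCommGroup M] [Module Rᵐᵒᵖ M]
  {K : Type w} [AddCommGroup K] {DK : DoubleModule R K}

/-- The right adjoint of `β` is injective. -/
def RightInjective (β : GBF R M K DK) : Prop :=
  ∀ x x' : M, (∀ y : M, β.b y x = β.b y x') → x = x'

/-- The right adjoint of `β` is bijective onto `Hom_R(M, K₀)`. -/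
def RightRegular (β : GBF R M K DK) : Prop :=
  β.RightInjective ∧
  ∀ f : M → K, (∀ y y' : M, f (y + y') = f y + f y') →
    (∀ (y : M) (r : R), f (op r • y) = DK.m0 (f y) r) →
    ∃ x : M, ∀ y : M, f y = β.b y x

/-- The left adjoint of `β` is injective. -/
def LeftInjective (β : GBF R M K DK) : Prop :=
  ∀ x x' : M, (∀ y : M, β.b x y = β.b x' y) → x = x'

/-- The left adjoint of `β` is bijective onto `Hom_R(M, K₁)`. -/
def LeftRegular (β : GBF R M K DK) : Prop :=
  β.LeftInjective ∧
  ∀ f : M → K, (∀ y y' : M, f (y + y') = f y + f y') →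
    (∀ (y : M) (r : R), f (op r • y) = DK.m1 (f y) r) →
    ∃ x : M, ∀ y : M, f y = β.b x y

/-- `α` is an adjoint anti-endomorphism for `β`: `β(w x, y) = β(x, α(w) y)`. -/
def IsAdjoint (β : GBF R M K DK) (α : Module.End Rᵐᵒᵖ M → Module.End Rᵐᵒᵖ M) : Prop :=
  ∀ (w : Module.End Rᵐᵒᵖ M) (x y : M), β.b (w x) y = β.b x (α w y)

/-- Similarity of general bilinear forms on the same module. -/
def Similar {K' : Type v'} [AddCommGroup K'] {DK' : DoubleModule R K'}
    (β : GBF R M K DK) (β' : GBF R M K' DK') : Prop :=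
  ∃ f : K → K', IsDoubleIso DK DK' f ∧ ∀ x y : M, β'.b x y = f (β.b x y)

end GBF

section Kalpha

variable {M : Type v} [AddCommGroup M] [Module Rᵐᵒᵖ M]

/-- The subgroup of `M ⊗_ℤ M` generated by the elements `(w x) ⊗ y - x ⊗ (α w y)`. -/
def kalphaRel (α : Module.End Rᵐᵒᵖ M → Module.End Rᵐᵒᵖ M) : Submodule ℤ (M ⊗[ℤ] M) :=
  Submodule.span ℤ
    {z | ∃ (w : Module.End Rᵐᵒᵖ M) (x y : M), z = (w x) ⊗ₜ[ℤ] y - x ⊗ₜ[ℤ] (α w y)}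

/-- `K_α`, the quotient of `M ⊗_ℤ M` by the relations `(w x) ⊗ y = x ⊗ (α w y)`. -/
abbrev Kalpha (α : Module.End Rᵐᵒᵖ M → Module.End Rᵐᵒᵖ M) : Type _ :=
  (M ⊗[ℤ] M) ⧸ kalphaRel α

/-- The map `x ⊗ y ↦ (x·r) ⊗ y` on `M ⊗_ℤ M`. -/
noncomputable def smulLeftMap (r : R) : (M ⊗[ℤ] M) →ₗ[ℤ] (M ⊗[ℤ] M) :=
  TensorProduct.map ((DistribMulAction.toAddMonoidHom M (op r : Rᵐᵒᵖ)).toIntLinearMap)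
    LinearMap.id

/-- The map `x ⊗ y ↦ x ⊗ (y·r)` on `M ⊗_ℤ M`. -/
noncomputable def smulRightMap (r : R) : (M ⊗[ℤ] M) →ₗ[ℤ] (M ⊗[ℤ] M) :=
  TensorProduct.map LinearMap.id
    ((DistribMulAction.toAddMonoidHom M (op r : Rᵐᵒᵖ)).toIntLinearMap)

theorem kalphaRel_le_left (α : Module.End Rᵐᵒᵖ M → Module.End Rᵐᵒᵖ M) (r : R) :
    kalphaRel α ≤ (kalphaRel α).comap (smulLeftMap (M := M) r) := by
  rw [kalphaRel, Submodule.span_le]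
  rintro _ ⟨w, x, y, rfl⟩
  rw [SetLike.mem_coe, Submodule.mem_comap, map_sub]
  have h1 : smulLeftMap (M := M) r ((w x) ⊗ₜ[ℤ] y) = (w (op r • x)) ⊗ₜ[ℤ] y := by
    simp [smulLeftMap, map_smul]; rfl
  have h2 : smulLeftMap (M := M) r (x ⊗ₜ[ℤ] (α w y)) = (op r • x) ⊗ₜ[ℤ] (α w y) := by
    simp [smulLeftMap]; rfl
  rw [h1, h2]
  exact Submodule.subset_span ⟨w, op r • x, y, rfl⟩

theorem kalphaRel_le_right (α : Module.End Rᵐᵒᵖ M → Module.End Rᵐᵒᵖ M) (r : R) :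
    kalphaRel α ≤ (kalphaRel α).comap (smulRightMap (M := M) r) := by
  rw [kalphaRel, Submodule.span_le]
  rintro _ ⟨w, x, y, rfl⟩
  rw [SetLike.mem_coe, Submodule.mem_comap, map_sub]
  have h1 : smulRightMap (M := M) r ((w x) ⊗ₜ[ℤ] y) = (w x) ⊗ₜ[ℤ] (op r • y) := by
    simp [smulRightMap]; rfl
  have h2 : smulRightMap (M := M) r (x ⊗ₜ[ℤ] (α w y)) = x ⊗ₜ[ℤ] (α w (op r • y)) := by
    simp [smulRightMap, map_smul]; rfl
  rw [h1, h2]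
  exact Submodule.subset_span ⟨w, x, op r • y, rfl⟩

/-- The `m0`-action on `K_α`. -/
noncomputable def kSmul0 (α : Module.End Rᵐᵒᵖ M → Module.End Rᵐᵒᵖ M) (r : R) :
    Kalpha α →ₗ[ℤ] Kalpha α :=
  Submodule.mapQ _ _ (smulLeftMap r) (kalphaRel_le_left α r)

/-- The `m1`-action on `K_α`. -/
noncomputable def kSmul1 (α : Module.End Rᵐᵒᵖ M → Module.End Rᵐᵒᵖ M) (r : R) :
    Kalpha α →ₗ[ℤ] Kalpha α :=
  Submodule.mapQ _ _ (smulRightMap r) (kalphaRel_le_right α r)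

theorem kSmul0_mk (α : Module.End Rᵐᵒᵖ M → Module.End Rᵐᵒᵖ M) (r : R) (t : M ⊗[ℤ] M) :
    kSmul0 α r (Submodule.Quotient.mk t) = Submodule.Quotient.mk (smulLeftMap r t) := rfl

theorem kSmul1_mk (α : Module.End Rᵐᵒᵖ M → Module.End Rᵐᵒᵖ M) (r : R) (t : M ⊗[ℤ] M) :
    kSmul1 α r (Submodule.Quotient.mk t) = Submodule.Quotient.mk (smulRightMap r t) := rfl

/-- The double `R`-module structure on `K_α`. -/
noncomputable def KalphaDM (α : Module.End Rᵐᵒᵖ M → Module.End Rᵐᵒᵖ M) :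
    DoubleModule R (Kalpha α) where
  m0 k r := kSmul0 α r k
  m1 k r := kSmul1 α r k
  m0_add_left k k' r := map_add _ k k'
  m0_add_right := by
    intro k r r'
    induction k using Submodule.Quotient.induction_on with
    | _ t =>
      rw [kSmul0_mk, kSmul0_mk, kSmul0_mk, ← Submodule.Quotient.mk_add]
      congr 1
      induction t with
      | zero => simp
      | tmul x y => change (op (r + r') • x) ⊗ₜ[ℤ] y = (op r • x) ⊗ₜ[ℤ] y + (op r' • x) ⊗ₜ[ℤ] y; simp [smulLeftMap, op_add, add_smul, TensorProduct.add_tmul]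
      | add a b ha hb => rw [map_add, map_add, map_add, ha, hb]; abel
  m0_mul := by
    intro k r r'
    induction k using Submodule.Quotient.induction_on with
    | _ t =>
      rw [kSmul0_mk, kSmul0_mk, kSmul0_mk]
      congr 1
      induction t with
      | zero => simp
      | tmul x y => change (op (r * r') • x) ⊗ₜ[ℤ] y = (op r' • op r • x) ⊗ₜ[ℤ] y; simp [smulLeftMap, op_mul, mul_smul]
      | add a b ha hb => rw [map_add, map_add, map_add, ha, hb]
  m0_one := by
    intro k
    induction k using Submodule.Quotient.induction_on with
    | _ t =>
      rw [kSmul0_mk]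
      congr 1
      induction t with
      | zero => simp
      | tmul x y => change (op (1 : R) • x) ⊗ₜ[ℤ] y = x ⊗ₜ[ℤ] y; simp [smulLeftMap]
      | add a b ha hb => rw [map_add, ha, hb]
  m1_add_left k k' r := map_add _ k k'
  m1_add_right := by
    intro k r r'
    induction k using Submodule.Quotient.induction_on with
    | _ t =>
      rw [kSmul1_mk, kSmul1_mk, kSmul1_mk, ← Submodule.Quotient.mk_add]
      congr 1
      induction t with
      | zero => simp
      | tmul x y => change x ⊗ₜ[ℤ] (op (r + r') • y) = x ⊗ₜ[ℤ] (op r • y) + x ⊗ₜ[ℤ] (op r' • y); simp [smulRightMap, op_add, add_smul, TensorProduct.tmul_add]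
      | add a b ha hb => rw [map_add, map_add, map_add, ha, hb]; abel
  m1_mul := by
    intro k r r'
    induction k using Submodule.Quotient.induction_on with
    | _ t =>
      rw [kSmul1_mk, kSmul1_mk, kSmul1_mk]
      congr 1
      induction t with
      | zero => simp
      | tmul x y => change x ⊗ₜ[ℤ] (op (r * r') • y) = x ⊗ₜ[ℤ] (op r' • op r • y); simp [smulRightMap, op_mul, mul_smul]
      | add a b ha hb => rw [map_add, map_add, map_add, ha, hb]
  m1_one := by
    intro k
    induction k using Submodule.Quotient.induction_on with
    | _ t =>
      rw [kSmul1_mk]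
      congr 1
      induction t with
      | zero => simp
      | tmul x y => change x ⊗ₜ[ℤ] (op (1 : R) • y) = x ⊗ₜ[ℤ] y; simp [smulRightMap]
      | add a b ha hb => rw [map_add, ha, hb]
  comm := by
    intro k a c
    induction k using Submodule.Quotient.induction_on with
    | _ t =>
      rw [kSmul0_mk, kSmul1_mk, kSmul1_mk, kSmul0_mk]
      congr 1
      induction t with
      | zero => simp
      | tmul x y => change (op a • x) ⊗ₜ[ℤ] (op c • y) = (op a • x) ⊗ₜ[ℤ] (op c • y); simp [smulLeftMap, smulRightMap]
      | add p q hp hq => rw [map_add, map_add, map_add, map_add, hp, hq]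

/-- The universal general bilinear form `b_α : M × M → K_α`. -/
noncomputable def balpha (α : Module.End Rᵐᵒᵖ M → Module.End Rᵐᵒᵖ M) :
    GBF R M (Kalpha α) (KalphaDM α) where
  b x y := Submodule.Quotient.mk (x ⊗ₜ[ℤ] y)
  add_left x x' y := by
    rw [TensorProduct.add_tmul, Submodule.Quotient.mk_add]
  add_right x y y' := by
    rw [TensorProduct.tmul_add, Submodule.Quotient.mk_add]
  smul_left x y r := by
    show _ = kSmul0 α r (Submodule.Quotient.mk (x ⊗ₜ[ℤ] y))
    rw [kSmul0_mk]
    congr 1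
  smul_right x y r := by
    show _ = kSmul1 α r (Submodule.Quotient.mk (x ⊗ₜ[ℤ] y))
    rw [kSmul1_mk]
    congr 1

end Kalpha

end Core

/-- `λ` is a right `θ`-asymmetry of the general bilinear form `β`:
`θ(b(x,y)) = b(y, λ x)` for all `x, y`. -/
def IsRightAsym {R : Type u} [Ring R] {M : Type v} [AddCommGroup M] [Module Rᵐᵒᵖ M]
    {K : Type w} [AddCommGroup K] {DK : DoubleModule R K}
    (β : GBF R M K DK) (θ : K → K) (lam : Module.End Rᵐᵒᵖ M) : Prop :=
  ∀ x y : M, θ (β.b x y) = β.b y (lam x)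

/- Right regularity lets one transport the left adjoint along `θ` back through the right adjoint,
`λ = (Ad_b^r)⁻¹ ∘ θ_* ∘ Ad_b^ℓ`; under `θ`-symmetry, composing with the involution `θ` exchanges
`Hom_R(M, K₀)` and `Hom_R(M, K₁)`, and with them the two adjoints. -/

structure IsDoubleAntiHom {R : Type u} [Ring R] {K : Type v} [AddCommGroup K]
    (DK : DoubleModule R K) (θ : K → K) : Prop where
  map_add : ∀ k k' : K, θ (k + k') = θ k + θ k'
  map_m0 : ∀ (k : K) (r : R), θ (DK.m0 k r) = DK.m1 (θ k) r
  map_m1 : ∀ (k : K) (r : R), θ (DK.m1 k r) = DK.m0 (θ k) r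

theorem IsDoubleAntiAuto.isDoubleAntiHom {R : Type u} [Ring R] {K : Type v} [AddCommGroup K]
    {DK : DoubleModule R K} {θ : K → K} (hθ : IsDoubleAntiAuto DK θ) : IsDoubleAntiHom DK θ :=
  ⟨hθ.2.1, hθ.2.2.1, hθ.2.2.2⟩

namespace GBF

variable {R : Type u} [Ring R] {M : Type v} [AddCommGroup M] [Module Rᵐᵒᵖ M]
  {K : Type w} [AddCommGroup K] {DK : DoubleModule R K} {β : GBF R M K DK} {θ : K → K}

theorem RightInjective.isLinearMap (hinj : β.RightInjective) (hθ : IsDoubleAntiHom DK θ)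
    {g : M → M} (hg : ∀ x y, θ (β.b x y) = β.b y (g x)) : IsLinearMap Rᵐᵒᵖ g where
  map_add x x' := hinj _ _ fun y => by
    rw [← hg, β.add_left, hθ.map_add, hg, hg, β.add_right]
  map_smul c x := hinj _ _ fun y => by
    rw [← hg, ← op_unop c, β.smul_left, hθ.map_m0, hg, ← β.smul_right]

theorem RightRegular.exists_isRightAsym (hreg : β.RightRegular) (hθ : IsDoubleAntiHom DK θ) :
    ∃ lam : Module.End Rᵐᵒᵖ M, IsRightAsym β θ lam := by
  have hsurj : ∀ x, ∃ z, ∀ y, θ (β.b x y) = β.b y z := fun x =>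
    hreg.2 (fun y => θ (β.b x y))
      (fun y y' => by rw [β.add_right, hθ.map_add])
      (fun y r => by rw [β.smul_right, hθ.map_m1])
  choose g hg using hsurj
  exact ⟨IsLinearMap.mk' g (hreg.1.isLinearMap hθ hg), hg⟩

theorem RightInjective.isRightAsym_unique (hinj : β.RightInjective) {lam lam' : Module.End Rᵐᵒᵖ M}
    (h : IsRightAsym β θ lam) (h' : IsRightAsym β θ lam') : lam = lam' :=
  LinearMap.ext fun x => hinj _ _ fun y => by rw [← h, ← h']

theorem rightInjective_iff_leftInjective_of_symm (hsym : ∀ x y, β.b x y = θ (β.b y x)) :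
    β.RightInjective ↔ β.LeftInjective :=
  ⟨fun hinj x x' h => hinj x x' fun y => by rw [hsym y x, hsym y x', h],
    fun hinj x x' h => hinj x x' fun y => by rw [hsym x y, hsym x' y, h]⟩

theorem RightRegular.leftRegular_of_symm (hreg : β.RightRegular) (hθ : IsDoubleAntiHom DK θ)
    (hinv : ∀ k, θ (θ k) = k) (hsym : ∀ x y, β.b x y = θ (β.b y x)) : β.LeftRegular := by
  refine ⟨(rightInjective_iff_leftInjective_of_symm hsym).1 hreg.1, fun f hadd hsmul => ?_⟩
  obtain ⟨x, hx⟩ := hreg.2 (fun y => θ (f y))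
    (fun y y' => by rw [hadd, hθ.map_add])
    (fun y r => by rw [hsmul, hθ.map_m1])
  exact ⟨x, fun y => by rw [hsym x y, ← hx, hinv]⟩

theorem LeftRegular.rightRegular_of_symm (hreg : β.LeftRegular) (hθ : IsDoubleAntiHom DK θ)
    (hinv : ∀ k, θ (θ k) = k) (hsym : ∀ x y, β.b x y = θ (β.b y x)) : β.RightRegular := by
  refine ⟨(rightInjective_iff_leftInjective_of_symm hsym).2 hreg.1, fun f hadd hsmul => ?_⟩
  obtain ⟨x, hx⟩ := hreg.2 (fun y => θ (f y))
    (fun y y' => by rw [hadd, hθ.map_add])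
    (fun y r => by rw [hsmul, hθ.map_m0])
  exact ⟨x, fun y => by rw [hsym y x, ← hx, hinv]⟩

end GBF

/-- (1) A right regular form admits a right `θ`-asymmetry; (2) a right
injective form admits at most one right `θ`-asymmetry; (3) if `θ` is an involution and `b`
is `θ`-symmetric, then right regularity (injectivity) is equivalent to left regularity
(injectivity). -/
theorem stmt_1 {R : Type u} [Ring R] {M : Type v} [AddCommGroup M] [Module Rᵐᵒᵖ M]
    {K : Type w} [AddCommGroup K] {DK : DoubleModule R K}
    (β : GBF R M K DK) (θ : K → K) (hθ : IsDoubleAntiAuto DK θ) :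
    (β.RightRegular → ∃ lam : Module.End Rᵐᵒᵖ M, IsRightAsym β θ lam) ∧
    (β.RightInjective → ∀ lam lam' : Module.End Rᵐᵒᵖ M,
      IsRightAsym β θ lam → IsRightAsym β θ lam' → lam = lam') ∧
    ((∀ k, θ (θ k) = k) → (∀ x y : M, β.b x y = θ (β.b y x)) →
      (β.RightRegular ↔ β.LeftRegular) ∧ (β.RightInjective ↔ β.LeftInjective)) := by
  have hθ' := hθ.isDoubleAntiHom
  exact ⟨fun hreg => hreg.exists_isRightAsym hθ',
    fun hinj _ _ => hinj.isRightAsym_unique,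
    fun hinv hsym =>
      ⟨⟨fun hreg => hreg.leftRegular_of_symm hθ' hinv hsym,
          fun hreg => hreg.rightRegular_of_symm hθ' hinv hsym⟩,
        GBF.rightInjective_iff_leftInjective_of_symm hsym⟩⟩
end

section
/- Let W be a ring and e ∈ W an idempotent which is full, i.e., W e W = W. Then for every right W-module N and every left W-module M, the additive map φ : N e ⊗_{eWe} e M → N ⊗_W M determined by φ(x ⊗ y) = x ⊗ y (for x ∈ Ne, y ∈ eM) is a well-defined isomorphism of abelian groups. -/
open MulOpposite TensorProduct Function

universe u v w v' w'

section BalTensor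

/-- The subgroup of relations defining the balanced tensor product `A ⊗_S B` of a right
`S`-module `A` and a left `S`-module `B` over a (possibly noncommutative) ring `S`. -/
def balRel (S : Type u) [Ring S] (A : Type v) [AddCommGroup A] [Module Sᵐᵒᵖ A]
    (B : Type w) [AddCommGroup B] [Module S B] : Submodule ℤ (A ⊗[ℤ] B) :=
  Submodule.span ℤ
    {z | ∃ (s : S) (a : A) (b : B), z = (op s • a) ⊗ₜ[ℤ] b - a ⊗ₜ[ℤ] (s • b)}

/-- The balanced tensor product `A ⊗_S B` over a possibly noncommutative ring `S`. -/
abbrev BalTensor (S : Type u) [Ring S] (A : Type v) [AddCommGroup A] [Module Sᵐᵒᵖ A]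
    (B : Type w) [AddCommGroup B] [Module S B] : Type (max v w) :=
  (A ⊗[ℤ] B) ⧸ balRel S A B

/-- Functoriality of the balanced tensor product in both arguments. -/
noncomputable def balMap {S : Type u} [Ring S] {A : Type v} {A' : Type v'}
    {B : Type w} {B' : Type w'}
    [AddCommGroup A] [AddCommGroup A'] [AddCommGroup B] [AddCommGroup B']
    [Module Sᵐᵒᵖ A] [Module Sᵐᵒᵖ A'] [Module S B] [Module S B']
    (f : A →ₗ[Sᵐᵒᵖ] A') (g : B →ₗ[S] B') :
    BalTensor S A B →ₗ[ℤ] BalTensor S A' B' :=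
  Submodule.liftQ _ ((balRel S A' B').mkQ ∘ₗ
      TensorProduct.map (f.toAddMonoidHom.toIntLinearMap) (g.toAddMonoidHom.toIntLinearMap))
    (by
      rw [balRel, Submodule.span_le]
      rintro _ ⟨s, a, b, rfl⟩
      rw [SetLike.mem_coe, LinearMap.mem_ker]
      erw [LinearMap.comp_apply, map_sub,
        TensorProduct.map_tmul, TensorProduct.map_tmul]
      have h1 : f.toAddMonoidHom.toIntLinearMap (op s • a) = op s • f a := f.map_smul _ _
      have h2 : g.toAddMonoidHom.toIntLinearMap (s • b) = s • g b := g.map_smul _ _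
      rw [h1, h2, map_sub, sub_eq_zero]
      have hmem : (op s • f a) ⊗ₜ[ℤ] (g.toAddMonoidHom.toIntLinearMap b) -
          (f.toAddMonoidHom.toIntLinearMap a) ⊗ₜ[ℤ] (s • g b) ∈ balRel S A' B' :=
        Submodule.subset_span ⟨s, f a, g b, rfl⟩
      rw [← sub_eq_zero] at *
      rw [← map_sub]
      exact (Submodule.Quotient.mk_eq_zero _).mpr hmem)

theorem balMap_mk {S : Type u} [Ring S] {A : Type v} {A' : Type v'}
    {B : Type w} {B' : Type w'}
    [AddCommGroup A] [AddCommGroup A'] [AddCommGroup B] [AddCommGroup B']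
    [Module Sᵐᵒᵖ A] [Module Sᵐᵒᵖ A'] [Module S B] [Module S B']
    (f : A →ₗ[Sᵐᵒᵖ] A') (g : B →ₗ[S] B') (a : A) (b : B) :
    balMap f g (Submodule.Quotient.mk (a ⊗ₜ[ℤ] b)) =
      Submodule.Quotient.mk ((f a) ⊗ₜ[ℤ] (g b)) := rfl

/-- A left `S`-module `F` is flat if `— ⊗_S F` preserves injectivity of maps of right
`S`-modules. -/
def LeftFlat (S : Type u) [Ring S] (F : Type w) [AddCommGroup F] [Module S F] : Prop :=
  ∀ (A A' : Type u) (iA : AddCommGroup A) (iA' : AddCommGroup A')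
    (mA : Module Sᵐᵒᵖ A) (mA' : Module Sᵐᵒᵖ A') (f : A →ₗ[Sᵐᵒᵖ] A'),
    Function.Injective f → Function.Injective (balMap f (LinearMap.id : F →ₗ[S] F))

/-- A right `S`-module `F` is flat if `F ⊗_S —` preserves injectivity of maps of left
`S`-modules. -/
def RightFlat (S : Type u) [Ring S] (F : Type v) [AddCommGroup F] [Module Sᵐᵒᵖ F] : Prop :=
  ∀ (B B' : Type u) (iB : AddCommGroup B) (iB' : AddCommGroup B')
    (mB : Module S B) (mB' : Module S B') (g : B →ₗ[S] B'),
    Function.Injective g → Function.Injective (balMap (LinearMap.id : F →ₗ[Sᵐᵒᵖ] F) g)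

end BalTensor

section Corner

variable {W : Type u} [Ring W]

/-- The additive subgroup `eWe = {x : W | e x e = x}` of `W`. -/
def cornerAdd (e : W) : AddSubgroup W where
  carrier := {x | e * x * e = x}
  add_mem' := by
    intro a b ha hb
    simp only [Set.mem_setOf_eq] at *
    rw [mul_add, add_mul, ha, hb]
  zero_mem' := by simp
  neg_mem' := by
    intro a ha
    simp only [Set.mem_setOf_eq] at *
    rw [mul_neg, neg_mul, ha]

theorem corner_one_mul (e : W) (he : e * e = e) {x : W} (hx : e * x * e = x) :
    e * x = x := by
  conv_lhs => rw [← hx]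
  rw [← mul_assoc e (e * x) e, ← mul_assoc e e x, he]
  exact hx

theorem corner_mul_one (e : W) (he : e * e = e) {x : W} (hx : e * x * e = x) :
    x * e = x := by
  conv_lhs => rw [← hx]
  rw [mul_assoc (e * x) e e, he]
  exact hx

theorem corner_mul_mem (e : W) (he : e * e = e) {x y : W}
    (hx : e * x * e = x) (hy : e * y * e = y) : e * (x * y) * e = x * y := by
  rw [← mul_assoc e x y, corner_one_mul e he hx, mul_assoc x y e,
    corner_mul_one e he hy]

/-- The corner ring structure on `eWe`, with unit `e`. -/
def cornerRing (e : W) (he : e * e = e) : Ring (cornerAdd e) :=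
  { (inferInstance : AddCommGroup (cornerAdd e)) with
    mul := fun x y => ⟨x.1 * y.1, corner_mul_mem e he x.2 y.2⟩
    one := ⟨e, by show e * e * e = e; rw [he, he]⟩
    mul_assoc := fun x y z => Subtype.ext (mul_assoc x.1 y.1 z.1)
    one_mul := fun x => Subtype.ext (corner_one_mul e he x.2)
    mul_one := fun x => Subtype.ext (corner_mul_one e he x.2)
    left_distrib := fun x y z => Subtype.ext (mul_add x.1 y.1 z.1)
    right_distrib := fun x y z => Subtype.ext (add_mul x.1 y.1 z.1)
    zero_mul := fun x => Subtype.ext (zero_mul x.1)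
    mul_zero := fun x => Subtype.ext (mul_zero x.1) }

variable (e : W)

/-- For a right `W`-module `N`, the additive subgroup `Ne = {x : N | x·e = x}`. -/
def rightCorner (N : Type v) [AddCommGroup N] [Module Wᵐᵒᵖ N] : AddSubgroup N where
  carrier := {x | op e • x = x}
  add_mem' := by
    intro a b ha hb
    simp only [Set.mem_setOf_eq] at *
    rw [smul_add, ha, hb]
  zero_mem' := by simp
  neg_mem' := by
    intro a ha
    simp only [Set.mem_setOf_eq] at *
    rw [smul_neg, ha]

/-- For a left `W`-module `M`, the additive subgroup `eM = {y : M | e·y = y}`. -/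
def leftCorner (M : Type w) [AddCommGroup M] [Module W M] : AddSubgroup M where
  carrier := {y | e • y = y}
  add_mem' := by
    intro a b ha hb
    simp only [Set.mem_setOf_eq] at *
    rw [smul_add, ha, hb]
  zero_mem' := by simp
  neg_mem' := by
    intro a ha
    simp only [Set.mem_setOf_eq] at *
    rw [smul_neg, ha]

variable (he : e * e = e) {N : Type v} [AddCommGroup N] [Module Wᵐᵒᵖ N]
  {M : Type w} [AddCommGroup M] [Module W M]

/-- The right action of the corner ring `eWe` on `Ne`. -/
def cornerRsmul (x : rightCorner e N) (s : cornerAdd e) : rightCorner e N :=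
  ⟨op s.1 • x.1, by
    show op e • (op s.1 • x.1) = op s.1 • x.1
    rw [← mul_smul, ← op_mul, corner_mul_one e he s.2]⟩

/-- The left action of the corner ring `eWe` on `eM`. -/
def cornerLsmul (s : cornerAdd e) (y : leftCorner e M) : leftCorner e M :=
  ⟨s.1 • y.1, by
    show e • (s.1 • y.1) = s.1 • y.1
    rw [← mul_smul, corner_one_mul e he s.2]⟩

/-- The relations defining the balanced tensor product `Ne ⊗_{eWe} eM`. -/
def cornerRel : Submodule ℤ ((rightCorner e N) ⊗[ℤ] (leftCorner e M)) :=
  Submodule.span ℤ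
    {z | ∃ (s : cornerAdd e) (x : rightCorner e N) (y : leftCorner e M),
      z = (cornerRsmul e he x s) ⊗ₜ[ℤ] y - x ⊗ₜ[ℤ] (cornerLsmul e he s y)}

/-- The canonical additive map `Ne ⊗_{eWe} eM → N ⊗_W M`, `x ⊗ y ↦ x ⊗ y`. -/
noncomputable def cornerToBal :
    ((rightCorner e N) ⊗[ℤ] (leftCorner e M) ⧸ cornerRel e he (N := N) (M := M))
      →ₗ[ℤ] BalTensor W N M :=
  Submodule.liftQ _ ((balRel W N M).mkQ ∘ₗ
      TensorProduct.map ((rightCorner e N).subtype.toIntLinearMap)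
        ((leftCorner e M).subtype.toIntLinearMap))
    (by
      rw [cornerRel, Submodule.span_le]
      rintro _ ⟨s, x, y, rfl⟩
      rw [SetLike.mem_coe, LinearMap.mem_ker, map_sub]
      erw [LinearMap.comp_apply,
        LinearMap.comp_apply, TensorProduct.map_tmul, TensorProduct.map_tmul]
      show Submodule.Quotient.mk ((op s.1 • x.1) ⊗ₜ[ℤ] y.1) -
          Submodule.Quotient.mk (x.1 ⊗ₜ[ℤ] (s.1 • y.1)) = 0
      rw [← Submodule.Quotient.mk_sub, Submodule.Quotient.mk_eq_zero]
      exact Submodule.subset_span ⟨s.1, x.1, y.1, rfl⟩)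

/-!
Write `1 = ∑ i, aᵢ e bᵢ`. The inverse of `φ` sends `x ⊗ y` to `∑ i, x aᵢ e ⊗ e bᵢ y`. The only
relation available in `Ne ⊗_{eWe} eM` is sliding an element `e c e` across the tensor sign, i.e.
`x u e c e ⊗ e v y = x u e ⊗ e c e v y`; inserting `1 = ∑ aⱼ e bⱼ` on one side and removing it on
the other then shows that this map is balanced over `W` and inverse to `φ`.
-/

theorem sum_mul_apply_eq_sum_apply_mul {R G ι : Type*} [Semiring R] [AddCommMonoid G] [Fintype ι]
    (T : R →+ R →+ G) {e : R} (hT : ∀ u c v, T (u * e * c) v = T u (c * e * v))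
    {a b : ι → R} (hsum : ∑ i, a i * e * b i = 1) (s : R) :
    ∑ i, T (s * a i) (b i) = ∑ i, T (a i) (b i * s) :=
  calc ∑ i, T (s * a i) (b i)
      = ∑ i, ∑ j, T (a j * e * (b j * s * a i)) (b i) := by
        refine Finset.sum_congr rfl fun i _ => ?_
        rw [← AddMonoidHom.finset_sum_apply, ← map_sum]
        simp only [← mul_assoc, ← Finset.sum_mul, hsum, one_mul]
    _ = ∑ j, ∑ i, T (a j) (b j * s * (a i * e * b i)) := by
        rw [Finset.sum_comm]
        refine Finset.sum_congr rfl fun j _ => Finset.sum_congr rfl fun i _ => ?_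
        rw [hT]
        simp only [mul_assoc]
    _ = ∑ i, T (a i) (b i * s) := by
        simp only [← map_sum, ← Finset.mul_sum, hsum, mul_one]

abbrev CornerTensor (N : Type v) [AddCommGroup N] [Module Wᵐᵒᵖ N]
    (M : Type w) [AddCommGroup M] [Module W M] : Type (max v w) :=
  (rightCorner e N) ⊗[ℤ] (leftCorner e M) ⧸ cornerRel e he (N := N) (M := M)

theorem cornerRel_mk_rsmul_tmul (s : cornerAdd e) (x : rightCorner e N) (y : leftCorner e M) :
    (Submodule.Quotient.mk (cornerRsmul e he x s ⊗ₜ[ℤ] y) : CornerTensor e he N M) =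
      Submodule.Quotient.mk (x ⊗ₜ[ℤ] cornerLsmul e he s y) :=
  (Submodule.Quotient.eq _).mpr (Submodule.subset_span ⟨s, x, y, rfl⟩)

theorem balRel_mk_smul_tmul (s : W) (x : N) (y : M) :
    (Submodule.Quotient.mk ((op s • x) ⊗ₜ[ℤ] y) : BalTensor W N M) =
      Submodule.Quotient.mk (x ⊗ₜ[ℤ] (s • y)) :=
  (Submodule.Quotient.eq _).mpr (Submodule.subset_span ⟨s, x, y, rfl⟩)

def toRightCorner : W →+ N →+ rightCorner e N :=
  AddMonoidHom.mk'
    (fun u => AddMonoidHom.mk'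
      (fun x => ⟨op (u * e) • x, by
        show op e • (op (u * e) • x) = op (u * e) • x
        rw [← mul_smul, ← op_mul, mul_assoc, he]⟩)
      (fun x x' => Subtype.ext (smul_add _ _ _)))
    (fun u u' => by ext x; simp [add_mul, add_smul])

def toLeftCorner : W →+ M →+ leftCorner e M :=
  AddMonoidHom.mk'
    (fun v => AddMonoidHom.mk'
      (fun y => ⟨(e * v) • y, by
        show e • ((e * v) • y) = (e * v) • y
        rw [← mul_smul, ← mul_assoc, he]⟩)
      (fun y y' => Subtype.ext (smul_add _ _ _)))
    (fun v v' => by ext y; simp [mul_add, add_smul])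

/-- `cornerTmul x y u v = x u e ⊗ e v y`. -/
noncomputable def cornerTmul (x : N) (y : M) : W →+ W →+ CornerTensor e he N M :=
  AddMonoidHom.mk'
    (fun u => AddMonoidHom.mk'
      (fun v => Submodule.Quotient.mk (toRightCorner e he u x ⊗ₜ[ℤ] toLeftCorner e he v y))
      (fun v v' => by simp [tmul_add]))
    (fun u u' => by ext v; simp [add_tmul])

theorem cornerTmul_apply (x : N) (y : M) (u v : W) :
    cornerTmul e he x y u v =
      Submodule.Quotient.mk (toRightCorner e he u x ⊗ₜ[ℤ] toLeftCorner e he v y) :=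
  rfl

theorem cornerTmul_mul_mul_left (x : N) (y : M) (u c v : W) :
    cornerTmul e he x y (u * e * c) v = cornerTmul e he x y u (c * e * v) := by
  let ece : cornerAdd e := ⟨e * c * e, by
    show e * (e * c * e) * e = e * c * e
    simp only [← mul_assoc, he]
    simp only [mul_assoc, he]⟩
  have hx : toRightCorner e he (u * e * c) x = cornerRsmul e he (toRightCorner e he u x) ece := by
    refine Subtype.ext ?_
    show op (u * e * c * e) • x = op (e * c * e) • op (u * e) • x
    rw [← mul_smul, ← op_mul]
    simp only [mul_assoc]
    rw [← mul_assoc e e, he]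
  have hy : toLeftCorner e he (c * e * v) y = cornerLsmul e he ece (toLeftCorner e he v y) := by
    refine Subtype.ext ?_
    show (e * (c * e * v)) • y = (e * c * e) • (e * v) • y
    rw [← mul_smul]
    simp only [mul_assoc]
    rw [← mul_assoc e e, he]
  rw [cornerTmul_apply, cornerTmul_apply, hx, hy, cornerRel_mk_rsmul_tmul]

theorem cornerTmul_smul_left (s : W) (x : N) (y : M) (u v : W) :
    cornerTmul e he (op s • x) y u v = cornerTmul e he x y (s * u) v := by
  have hx : toRightCorner e he u (op s • x) = toRightCorner e he (s * u) x := by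
    refine Subtype.ext ?_
    show op (u * e) • op s • x = op (s * u * e) • x
    rw [← mul_smul, ← op_mul, mul_assoc]
  rw [cornerTmul_apply, cornerTmul_apply, hx]

theorem cornerTmul_smul_right (s : W) (x : N) (y : M) (u v : W) :
    cornerTmul e he x (s • y) u v = cornerTmul e he x y u (v * s) := by
  have hy : toLeftCorner e he v (s • y) = toLeftCorner e he (v * s) y := by
    refine Subtype.ext ?_
    show (e * v) • s • y = (e * (v * s)) • y
    rw [← mul_smul, mul_assoc]
  rw [cornerTmul_apply, cornerTmul_apply, hy]

theorem cornerTmul_eq_cornerTmul_idem_left (x : rightCorner e N) (y : M) (u v : W) :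
    cornerTmul e he x.1 y u v = cornerTmul e he x.1 y e (u * e * v) := by
  have hx : toRightCorner e he u x.1 = toRightCorner e he (e * e * u) x.1 := by
    refine Subtype.ext ?_
    show op (u * e) • x.1 = op (e * e * u * e) • x.1
    conv_lhs => rw [← x.2]
    show op (u * e) • op e • x.1 = _
    rw [← mul_smul, ← op_mul, he, ← mul_assoc]
  rw [cornerTmul_apply, hx, ← cornerTmul_apply, cornerTmul_mul_mul_left]

theorem cornerTmul_idem_one (x : rightCorner e N) (y : leftCorner e M) :
    cornerTmul e he x.1 y.1 e 1 = Submodule.Quotient.mk (x ⊗ₜ[ℤ] y) := by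
  have hx : toRightCorner e he e x.1 = x := by
    refine Subtype.ext ?_
    show op (e * e) • x.1 = x.1
    rw [he]
    exact x.2
  have hy : toLeftCorner e he 1 y.1 = y := by
    refine Subtype.ext ?_
    show (e * 1) • y.1 = y.1
    rw [mul_one]
    exact y.2
  rw [cornerTmul_apply, hx, hy]

theorem cornerToBal_cornerTmul (x : N) (y : M) (u v : W) :
    cornerToBal e he (cornerTmul e he x y u v) =
      Submodule.Quotient.mk (x ⊗ₜ[ℤ] ((u * e * v) • y)) := by
  show Submodule.Quotient.mk ((op (u * e) • x) ⊗ₜ[ℤ] ((e * v) • y)) = _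
  rw [balRel_mk_smul_tmul, ← mul_smul, mul_assoc, ← mul_assoc e, he, ← mul_assoc]

variable {ι : Type*} [Fintype ι] (a b : ι → W)

noncomputable def tensorToCorner : N ⊗[ℤ] M →ₗ[ℤ] CornerTensor e he N M :=
  ∑ i, (cornerRel e he).mkQ ∘ₗ
    TensorProduct.map (toRightCorner e he (a i)).toIntLinearMap
      (toLeftCorner e he (b i)).toIntLinearMap

theorem tensorToCorner_tmul (x : N) (y : M) :
    tensorToCorner e he a b (x ⊗ₜ[ℤ] y) = ∑ i, cornerTmul e he x y (a i) (b i) := by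
  rw [tensorToCorner, LinearMap.sum_apply]
  rfl

variable {a b}

theorem balRel_le_ker_tensorToCorner (hsum : ∑ i, a i * e * b i = 1) :
    balRel W N M ≤ LinearMap.ker (tensorToCorner e he a b) := by
  rw [balRel, Submodule.span_le]
  rintro _ ⟨s, x, y, rfl⟩
  rw [SetLike.mem_coe, LinearMap.mem_ker, map_sub, sub_eq_zero, tensorToCorner_tmul,
    tensorToCorner_tmul]
  simp only [cornerTmul_smul_left, cornerTmul_smul_right]
  exact sum_mul_apply_eq_sum_apply_mul _ (cornerTmul_mul_mul_left e he x y) hsum s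

noncomputable def balToCorner (hsum : ∑ i, a i * e * b i = 1) :
    BalTensor W N M →ₗ[ℤ] CornerTensor e he N M :=
  (balRel W N M).liftQ (tensorToCorner e he a b) (balRel_le_ker_tensorToCorner e he hsum)

theorem balToCorner_cornerToBal (hsum : ∑ i, a i * e * b i = 1) (p : CornerTensor e he N M) :
    balToCorner e he hsum (cornerToBal e he p) = p := by
  suffices balToCorner e he hsum ∘ₗ cornerToBal e he = LinearMap.id from
    DFunLike.congr_fun this p
  refine Submodule.linearMap_qext _ (TensorProduct.ext' fun x y => ?_)
  show tensorToCorner e he a b (x.1 ⊗ₜ[ℤ] y.1) = Submodule.Quotient.mk (x ⊗ₜ[ℤ] y)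
  rw [tensorToCorner_tmul,
    Finset.sum_congr rfl fun i _ => cornerTmul_eq_cornerTmul_idem_left e he x y.1 (a i) (b i),
    ← map_sum, hsum, cornerTmul_idem_one]

theorem cornerToBal_balToCorner (hsum : ∑ i, a i * e * b i = 1) (q : BalTensor W N M) :
    cornerToBal e he (balToCorner e he hsum q) = q := by
  suffices cornerToBal e he ∘ₗ balToCorner e he hsum = LinearMap.id from
    DFunLike.congr_fun this q
  refine Submodule.linearMap_qext _ (TensorProduct.ext' fun x y => ?_)
  show cornerToBal e he (tensorToCorner e he a b (x ⊗ₜ[ℤ] y)) =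
    Submodule.Quotient.mk (x ⊗ₜ[ℤ] y)
  simp only [tensorToCorner_tmul, map_sum, cornerToBal_cornerTmul]
  calc ∑ i, Submodule.Quotient.mk (x ⊗ₜ[ℤ] ((a i * e * b i) • y))
      = Submodule.Quotient.mk (x ⊗ₜ[ℤ] ((∑ i, a i * e * b i) • y)) := by
        rw [Finset.sum_smul, tmul_sum]
        exact (map_sum (balRel W N M).mkQ _ _).symm
    _ = Submodule.Quotient.mk (x ⊗ₜ[ℤ] y) := by rw [hsum, one_smul]

theorem cornerToBal_bijective (hsum : ∑ i, a i * e * b i = 1) :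
    Function.Bijective (cornerToBal e he (N := N) (M := M)) :=
  Function.bijective_iff_has_inverse.mpr ⟨balToCorner e he hsum,
    balToCorner_cornerToBal e he hsum, cornerToBal_balToCorner e he hsum⟩

/-- If `e` is a full idempotent of `W` (`W e W = W`), then for every
right `W`-module `N` and left `W`-module `M`, the canonical map
`φ : Ne ⊗_{eWe} eM → N ⊗_W M`, `x ⊗ y ↦ x ⊗ y`, is an isomorphism of abelian groups. -/
theorem stmt_13 {W : Type u} [Ring W] (e : W) (he : e * e = e)
    (hfull : ∃ (n : ℕ) (a b : Fin n → W), ∑ i, a i * e * b i = 1)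
    (N : Type v) [AddCommGroup N] [Module Wᵐᵒᵖ N]
    (M : Type w) [AddCommGroup M] [Module W M] :
    Function.Bijective (cornerToBal e he (N := N) (M := M)) ∧
    ∀ (x : rightCorner e N) (y : leftCorner e M),
      cornerToBal e he (Submodule.Quotient.mk (x ⊗ₜ[ℤ] y)) =
        Submodule.Quotient.mk (x.1 ⊗ₜ[ℤ] y.1) := by
  obtain ⟨_, _, _, hsum⟩ := hfull
  exact ⟨cornerToBal_bijective e he hsum, fun _ _ => rfl⟩

end Corner
end
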